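/- arXiv:2306.17606 — 2 statements merged into one kernel-verified Lean document; each statement's English description precedes it below -/
import Mathlib

section
/- Let X ∈ ℂ^{r} and Y ∈ ℂ^{q} be complex vectors (columns), viewed as r×1 and q×1 matrices. Suppose there exists a real matrix Δ ∈ ℝ^{q×r} with ΔX = Y. Then the matrix Δ* = [Re(Y) Im(Y)] · [Re(X) Im(X)]† (where † denotes the Moore–Penrose pseudoinverse of the r×2 real matrix [Re(X) Im(X)]) satisfies Δ* X = Y. -/
open Matrix
open scoped Classical

/-- The Moore–Penrose pseudoinverse of a real matrix, characterized by the four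
Penrose conditions. -/
noncomputable def pinv {m n : ℕ} (A : Matrix (Fin m) (Fin n) ℝ) :
    Matrix (Fin n) (Fin m) ℝ :=
  if h : ∃ B : Matrix (Fin n) (Fin m) ℝ,
      A * B * A = A ∧ B * A * B = B ∧ (A * B)ᵀ = A * B ∧ (B * A)ᵀ = B * A
  then h.choose else 0

/-- The `r × 2` real matrix `[Re(X) Im(X)]` formed from a complex vector `X`. -/
noncomputable def reimCols {r : ℕ} (X : Fin r → ℂ) : Matrix (Fin r) (Fin 2) ℝ :=
  Matrix.of fun i k => if k = 0 then (X i).re else (X i).im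

/-!
Write `A = [Re X  Im X]` and `C = [Re Y  Im Y]`. For a real `Δ`, the complex equation `Δ X = Y` is
the real equation `Δ A = C`, and any solvable system `Δ A = C` is solved by `C A⁺`, since
`C A⁺ A = Δ A A⁺ A = Δ A = C` by the first Penrose condition.

The Moore–Penrose inverse exists: with `S = Aᴴ A` and `S⁺ = cfc (·⁻¹) S` (using `0⁻¹ = 0`, this
inverts `S` on its range and kills its kernel), `B = S⁺ Aᴴ` satisfies the Penrose conditions.
The first one holds because `Aᴴ A (1 - S⁺ S) = 0` forces `A (1 - S⁺ S) = 0`.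
-/

section SelfAdjointPseudoinverse

variable {A : Type*} [Ring A] [StarRing A] [Algebra ℝ A] [TopologicalSpace A]
  [ContinuousFunctionalCalculus ℝ A IsSelfAdjoint] {a : A}

lemma commute_cfc_inv_self (ha : IsSelfAdjoint a) : Commute (cfc (·⁻¹ : ℝ → ℝ) a) a := by
  simpa only [cfc_id ℝ a] using cfc_commute_cfc (·⁻¹ : ℝ → ℝ) id a

lemma mul_cfc_inv_mul_self (hfin : (spectrum ℝ a).Finite) (ha : IsSelfAdjoint a) :
    a * cfc (·⁻¹ : ℝ → ℝ) a * a = a := by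
  have hc : ∀ f : ℝ → ℝ, ContinuousOn f (spectrum ℝ a) := hfin.continuousOn
  conv_rhs => rw [← cfc_id' ℝ a]
  nth_rewrite 1 [← cfc_id' ℝ a]
  nth_rewrite 3 [← cfc_id' ℝ a]
  rw [← cfc_mul _ _ a (hc _) (hc _), ← cfc_mul _ _ a (hc _) (hc _)]
  exact cfc_congr fun x _ => mul_inv_mul_cancel x

lemma cfc_inv_mul_self_mul_cfc_inv (hfin : (spectrum ℝ a).Finite) (ha : IsSelfAdjoint a) :
    cfc (·⁻¹ : ℝ → ℝ) a * a * cfc (·⁻¹ : ℝ → ℝ) a = cfc (·⁻¹ : ℝ → ℝ) a := by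
  have hc : ∀ f : ℝ → ℝ, ContinuousOn f (spectrum ℝ a) := hfin.continuousOn
  nth_rewrite 2 [← cfc_id' ℝ a]
  rw [← cfc_mul _ _ a (hc _) (hc _), ← cfc_mul _ _ a (hc _) (hc _)]
  exact cfc_congr fun x _ => by simpa only [inv_inv] using mul_inv_mul_cancel x⁻¹

end SelfAdjointPseudoinverse

namespace Matrix

variable {m n 𝕜 : Type*} [RCLike 𝕜] [Fintype m] [Fintype n] [DecidableEq n]

def IsMoorePenroseInverse (A : Matrix m n 𝕜) (B : Matrix n m 𝕜) : Prop :=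
  A * B * A = A ∧ B * A * B = B ∧ (A * B)ᴴ = A * B ∧ (B * A)ᴴ = B * A

open scoped ComplexOrder in
lemma exists_isMoorePenroseInverse (A : Matrix m n 𝕜) : ∃ B, IsMoorePenroseInverse A B := by
  set S := Aᴴ * A with hS_def
  set T := cfc (·⁻¹ : ℝ → ℝ) S
  have hS : S.IsHermitian := isHermitian_conjTranspose_mul_self A
  have hT : Tᴴ = T := (cfc_predicate (·⁻¹ : ℝ → ℝ) S).star_eq
  have hTS : Commute T S := commute_cfc_inv_self hS.isSelfAdjoint
  have hTST : T * S * T = T := cfc_inv_mul_self_mul_cfc_inv S.finite_real_spectrum hS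
  have hATS : A * T * S = A := by
    have hSTS : S * (1 - T * S) = 0 := by
      rw [Matrix.mul_sub, Matrix.mul_one, ← Matrix.mul_assoc,
        mul_cfc_inv_mul_self S.finite_real_spectrum hS, sub_self]
    rw [hS_def, conjTranspose_mul_self_mul_eq_zero, Matrix.mul_sub, Matrix.mul_one] at hSTS
    rw [Matrix.mul_assoc]
    exact (sub_eq_zero.1 hSTS).symm
  refine ⟨T * Aᴴ, ?_, ?_, ?_, ?_⟩
  · calc A * (T * Aᴴ) * A = A * T * S := by simp only [hS_def, Matrix.mul_assoc]
      _ = A := hATS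
  · calc T * Aᴴ * A * (T * Aᴴ) = T * S * T * Aᴴ := by simp only [hS_def, Matrix.mul_assoc]
      _ = T * Aᴴ := by rw [hTST]
  · simp only [conjTranspose_mul, conjTranspose_conjTranspose, hT, Matrix.mul_assoc]
  · calc (T * Aᴴ * A)ᴴ = (T * S)ᴴ := by rw [Matrix.mul_assoc]
      _ = T * S := by rw [conjTranspose_mul, hS.eq, hT, hTS.eq]
      _ = T * Aᴴ * A := by rw [hS_def, Matrix.mul_assoc]

end Matrix

lemma pinv_isMoorePenroseInverse {m n : ℕ} (A : Matrix (Fin m) (Fin n) ℝ) :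
    IsMoorePenroseInverse A (pinv A) := by
  have hex : ∃ B : Matrix (Fin n) (Fin m) ℝ,
      A * B * A = A ∧ B * A * B = B ∧ (A * B)ᵀ = A * B ∧ (B * A)ᵀ = B * A := by
    simpa only [IsMoorePenroseInverse, conjTranspose_eq_transpose_of_trivial]
      using exists_isMoorePenroseInverse A
  rw [pinv, dif_pos hex]
  simpa only [IsMoorePenroseInverse, conjTranspose_eq_transpose_of_trivial] using hex.choose_spec

lemma mul_reimCols {q r : ℕ} (M : Matrix (Fin q) (Fin r) ℝ) (X : Fin r → ℂ) :
    M * reimCols X = reimCols (M.map (fun x => (x : ℂ)) *ᵥ X) := by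
  ext i k
  by_cases hk : k = 0 <;>
    simp [reimCols, Matrix.mul_apply, Matrix.mulVec, dotProduct, hk, Complex.re_sum,
      Complex.im_sum, mul_comm]

lemma reimCols_injective {r : ℕ} : Function.Injective (reimCols (r := r)) := fun _ _ h =>
  funext fun i => Complex.ext (congrFun (congrFun h i) 0) (congrFun (congrFun h i) 1)

/-- If some real matrix `Δ` satisfies `Δ X = Y` (for complex column vectors `X`, `Y`),
then `Δ* = [Re(Y) Im(Y)] · [Re(X) Im(X)]†` also satisfies `Δ* X = Y`. -/
theorem pinv_solution_satisfies {q r : ℕ} (X : Fin r → ℂ) (Y : Fin q → ℂ)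
    (h : ∃ Δ : Matrix (Fin q) (Fin r) ℝ, (Δ.map (fun x => (x : ℂ))).mulVec X = Y) :
    (((reimCols Y * pinv (reimCols X)).map (fun x => (x : ℂ)))).mulVec X = Y := by
  obtain ⟨Δ, hΔ⟩ := h
  have hΔA : Δ * reimCols X = reimCols Y := by rw [mul_reimCols, hΔ]
  have hsol : reimCols Y * pinv (reimCols X) * reimCols X = reimCols Y := by
    rw [← hΔA, Matrix.mul_assoc Δ, Matrix.mul_assoc Δ, (pinv_isMoorePenroseInverse _).1]
  exact reimCols_injective (by rw [← mul_reimCols, hsol])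
end

section
/- Let X ∈ ℂ^r, Y ∈ ℂ^q be nonzero complex column vectors with [Re(X) Im(X)] of rank 2. If a real matrix Δ satisfies ΔX = Y, then ‖Δ‖ ≥ ‖[Re(Y) Im(Y)] · [Re(X) Im(X)]†‖, i.e., the explicit choice Δ* = [Re(Y) Im(Y)][Re(X) Im(X)]† achieves the minimum spectral norm among all real solutions of ΔX = Y. -/
open Matrix
open scoped Classical
open scoped Matrix.Norms.L2Operator

/-!
Writing `A = [Re(X) Im(X)]`, the equation `ΔX = Y` says `Δ A = [Re(Y) Im(Y)]`, so the candidate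
`[Re(Y) Im(Y)] A†` equals `Δ (A A†)`. By the Penrose conditions `A A†` is a symmetric idempotent,
i.e. an orthogonal projection, so its spectral norm is at most `1` and `‖Δ (A A†)‖ ≤ ‖Δ‖`.
Full column rank of `A` guarantees that `A†` exists: `(AᵀA)⁻¹Aᵀ` satisfies the Penrose conditions.
-/

theorem Matrix.isUnit_of_rank_eq_card {n K : Type*} [Fintype n] [DecidableEq n] [Field K]
    {A : Matrix n n K} (h : A.rank = Fintype.card n) : IsUnit A := by
  refine mulVec_surjective_iff_isUnit.1 fun y => ?_
  have hrange : LinearMap.range A.mulVecLin = ⊤ :=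
    Submodule.eq_top_of_finrank_eq (h.trans (Module.finrank_fintype_fun_eq_card K).symm)
  exact LinearMap.range_eq_top.1 hrange y

theorem Matrix.isUnit_transpose_mul_self_of_rank_eq_card {m n R : Type*} [Fintype m]
    [Fintype n] [DecidableEq n] [Field R] [LinearOrder R] [IsStrictOrderedRing R]
    {A : Matrix m n R} (h : A.rank = Fintype.card n) : IsUnit (Aᵀ * A) :=
  isUnit_of_rank_eq_card (by rwa [rank_transpose_mul_self])

section Penrose

variable {m n R : Type*} [Fintype m] [Fintype n] [CommRing R]

def IsPenroseInverse (A : Matrix m n R) (B : Matrix n m R) : Prop :=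
  A * B * A = A ∧ B * A * B = B ∧ (A * B)ᵀ = A * B ∧ (B * A)ᵀ = B * A

theorem IsPenroseInverse.of_mul_eq_one [DecidableEq n] {A : Matrix m n R} {B : Matrix n m R}
    (hBA : B * A = 1) (hAB : (A * B)ᵀ = A * B) : IsPenroseInverse A B :=
  ⟨by rw [Matrix.mul_assoc, hBA, Matrix.mul_one], by rw [hBA, Matrix.one_mul], hAB,
    by rw [hBA, transpose_one]⟩

theorem IsPenroseInverse.isStarProjection_mul [StarRing R] [TrivialStar R]
    {A : Matrix m n R} {B : Matrix n m R} (h : IsPenroseInverse A B) :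
    IsStarProjection (A * B) where
  isIdempotentElem := by
    rw [IsIdempotentElem, ← Matrix.mul_assoc, h.1]
  isSelfAdjoint := by
    rw [IsSelfAdjoint, star_eq_conjTranspose, conjTranspose_eq_transpose_of_trivial, h.2.2.1]

end Penrose

theorem exists_isPenroseInverse_of_rank_eq_card {m n R : Type*} [Fintype m] [Fintype n]
    [DecidableEq n] [Field R] [LinearOrder R] [IsStrictOrderedRing R] {A : Matrix m n R}
    (h : A.rank = Fintype.card n) : ∃ B, IsPenroseInverse A B := by
  have hunit := (isUnit_iff_isUnit_det _).1 (isUnit_transpose_mul_self_of_rank_eq_card h)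
  refine ⟨(Aᵀ * A)⁻¹ * Aᵀ, .of_mul_eq_one ?_ ?_⟩
  · rw [Matrix.mul_assoc]
    exact nonsing_inv_mul _ hunit
  · rw [transpose_mul, transpose_mul, transpose_transpose, transpose_nonsing_inv,
      transpose_mul, transpose_transpose, Matrix.mul_assoc]

theorem isPenroseInverse_pinv {m n : ℕ} {A : Matrix (Fin m) (Fin n) ℝ}
    (h : ∃ B, IsPenroseInverse A B) : IsPenroseInverse A (pinv A) := by
  rw [pinv]
  split_ifs with hpinv
  exacts [hpinv.choose_spec, absurd h hpinv]

theorem reimCols_map_ofReal_mulVec {q r : ℕ} (Δ : Matrix (Fin q) (Fin r) ℝ) (X : Fin r → ℂ) :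
    reimCols ((Δ.map (fun x => (x : ℂ))).mulVec X) = Δ * reimCols X := by
  ext i k
  fin_cases k <;> simp [reimCols, mulVec, dotProduct, Matrix.mul_apply, Complex.re_sum,
    Complex.im_sum]

theorem pinv_solution_min_norm_general {q r : ℕ} (X : Fin r → ℂ) (Y : Fin q → ℂ)
    (hrank : (reimCols X).rank = 2)
    (Δ : Matrix (Fin q) (Fin r) ℝ)
    (hΔ : (Δ.map (fun x => (x : ℂ))).mulVec X = Y) :
    ‖reimCols Y * pinv (reimCols X)‖ ≤ ‖Δ‖ := by
  have hP : IsStarProjection (reimCols X * pinv (reimCols X)) :=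
    (isPenroseInverse_pinv (exists_isPenroseInverse_of_rank_eq_card
      (hrank.trans (Fintype.card_fin 2).symm))).isStarProjection_mul
  calc ‖reimCols Y * pinv (reimCols X)‖ = ‖Δ * (reimCols X * pinv (reimCols X))‖ := by
        rw [← hΔ, reimCols_map_ofReal_mulVec, Matrix.mul_assoc]
    _ ≤ ‖Δ‖ * ‖reimCols X * pinv (reimCols X)‖ := l2_opNorm_mul _ _
    _ ≤ ‖Δ‖ := mul_le_of_le_one_right (norm_nonneg _) (hP.norm_le)

/-- Among real solutions `Δ` of `Δ X = Y`, the explicit choice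
`Δ* = [Re(Y) Im(Y)] · [Re(X) Im(X)]†` achieves the minimum spectral norm:
every real solution `Δ` has `‖Δ‖ ≥ ‖Δ*‖`. -/
theorem pinv_solution_min_norm {q r : ℕ} (X : Fin r → ℂ) (Y : Fin q → ℂ)
    (hX : X ≠ 0) (hY : Y ≠ 0) (hrank : (reimCols X).rank = 2)
    (Δ : Matrix (Fin q) (Fin r) ℝ)
    (hΔ : (Δ.map (fun x => (x : ℂ))).mulVec X = Y) :
    ‖reimCols Y * pinv (reimCols X)‖ ≤ ‖Δ‖ :=
  pinv_solution_min_norm_general X Y hrank Δ hΔ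
end
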